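/- Let E be a real vector space with a nonempty collection 𝒲 of wedges having the (2,n)-Riesz decomposition property for every n ∈ ℕ. Let (W_i)_{i∈I} be wedges in 𝒲 with ∑_{i∈I} W_i generating in E, and let (φ_i)_{i∈I} be linear functionals on E such that there exists a linear functional ψ₀ on E with (ψ₀ − φ_i)(x) ≥ 0 for all x ∈ W_i and all i ∈ I. Then the family (φ_i, W_i′)_{i∈I} in the algebraic dual E′ (with W_i′ the dual wedge of W_i) has a unique multi-supremum ψ, and for every x ∈ ∑_{i∈I} W_i, ψ(x) = sup { ∑_{i∈I} φ_i(y_i) : y_i ∈ W_i for all i, only finitely many y_i nonzero, ∑_{i∈I} y_i = x }, the supremum taken in ℝ. -/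

import Mathlib

/-- A wedge in a real vector space: a nonempty subset closed under addition
and multiplication by nonnegative scalars. -/
def IsWedge {E : Type*} [AddCommGroup E] [Module ℝ E] (W : Set E) : Prop :=
  W.Nonempty ∧ (∀ x ∈ W, ∀ y ∈ W, x + y ∈ W) ∧ ∀ (c : ℝ), 0 ≤ c → ∀ x ∈ W, c • x ∈ W

/-- `u` is a multi-upper bound of the family `(x i, W i)`. -/
def IsMultiUpperBound {E ι : Type*} [AddCommGroup E] [Module ℝ E]
    (x : ι → E) (W : ι → Set E) (u : E) : Prop :=
  ∀ i, u - x i ∈ W i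

/-- `z` is a multi-supremum of the family `(x i, W i)`. -/
def IsMultiSup {E ι : Type*} [AddCommGroup E] [Module ℝ E]
    (x : ι → E) (W : ι → Set E) (z : E) : Prop :=
  IsMultiUpperBound x W z ∧ ∀ u, IsMultiUpperBound x W u → ∀ i, u - z ∈ W i


/-- `∑_{i ∈ I} W i` : the set of all finite (nonempty) sums of elements of `⋃ i, W i`. -/
def wedgeSum {E ι : Type*} [AddCommGroup E] [Module ℝ E] (W : ι → Set E) : Set E :=
  {x | ∃ l : List E, l ≠ [] ∧ (∀ y ∈ l, y ∈ ⋃ i, W i) ∧ l.sum = x}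

/-- The collection `𝒲` of wedges has the (2,n)-Riesz decomposition property for every
`n ∈ ℕ`: for every finite collection `(W j)` of wedges from `𝒲`, whenever
`x₁, x₂ ∈ ∑ j, W j` and `y j ∈ W j` satisfy `x₁ + x₂ = ∑ j, y j`, there is a
decomposition `z₁ j, z₂ j ∈ W j` with `x₁ = ∑ j, z₁ j`, `x₂ = ∑ j, z₂ j` and
`y j = z₁ j + z₂ j` for all `j`. -/
def HasRDP2 {E : Type*} [AddCommGroup E] [Module ℝ E] (𝒲 : Set (Set E)) : Prop :=
  ∀ (n : ℕ) (W : Fin n → Set E), (∀ j, W j ∈ 𝒲) →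
    ∀ x₁ x₂ : E, x₁ ∈ wedgeSum W → x₂ ∈ wedgeSum W →
    ∀ y : Fin n → E, (∀ j, y j ∈ W j) → x₁ + x₂ = ∑ j, y j →
    ∃ z₁ z₂ : Fin n → E, (∀ j, z₁ j ∈ W j) ∧ (∀ j, z₂ j ∈ W j) ∧
      x₁ = ∑ j, z₁ j ∧ x₂ = ∑ j, z₂ j ∧ ∀ j, y j = z₁ j + z₂ j

/-!
For `x` in the wedge `S = ∑ i, W i` let `f x` be the supremum of `∑ i, φ i (y i)` over all
decompositions `x = ∑ i, y i` with `y i ∈ W i`; it is finite because `ψ₀` bounds every such sum.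
Concatenating decompositions makes `f` superadditive, and the Riesz decomposition property splits a
decomposition of `x₁ + x₂` into decompositions of `x₁` and of `x₂`, so `f` is additive on `S`.
Being also positively homogeneous, `f` extends uniquely to a linear functional `ψ` on `E = S - S`.
A linear functional dominates every `φ i` on `W i` exactly when it dominates `f` on `S`, so `ψ` is
the least such functional, i.e. the multi-supremum; it is unique because the `W i` span `E`.
-/

open scoped Pointwise

section Wedge

variable {E ι : Type*} [AddCommGroup E] [Module ℝ E] {W : ι → Set E}

lemma IsWedge.zero_mem {C : Set E} (hC : IsWedge C) : (0 : E) ∈ C := by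
  obtain ⟨x, hx⟩ := hC.1
  simpa using hC.2.2 0 le_rfl x hx

lemma subset_wedgeSum (i : ι) : W i ⊆ wedgeSum W := fun x hx =>
  ⟨[x], List.cons_ne_nil _ _, by simpa using Set.mem_iUnion_of_mem i hx, List.sum_singleton⟩

lemma wedgeSum_subset {M : AddSubmonoid E} (h : ∀ i, W i ⊆ M) : wedgeSum W ⊆ M := by
  rintro _ ⟨l, -, hl, rfl⟩
  refine M.list_sum_mem fun y hy => ?_
  obtain ⟨i, hi⟩ := Set.mem_iUnion.1 (hl y hy)
  exact h i hi

lemma nonempty_of_mem_wedgeSum {x : E} (hx : x ∈ wedgeSum W) : Nonempty ι := by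
  obtain ⟨l, hl, hmem, -⟩ := hx
  obtain ⟨y, hy⟩ := List.exists_mem_of_ne_nil l hl
  obtain ⟨i, -⟩ := Set.mem_iUnion.1 (hmem y hy)
  exact ⟨i⟩

lemma isWedge_wedgeSum [Nonempty ι] (hW : ∀ i, IsWedge (W i)) : IsWedge (wedgeSum W) := by
  refine ⟨?_, ?_, ?_⟩
  · obtain ⟨x, hx⟩ := (hW (Classical.arbitrary ι)).1
    exact ⟨x, subset_wedgeSum _ hx⟩
  · rintro _ ⟨l₁, hl₁, h₁, rfl⟩ _ ⟨l₂, -, h₂, rfl⟩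
    refine ⟨l₁ ++ l₂, by simp [hl₁], fun y hy => ?_, List.sum_append⟩
    rcases List.mem_append.1 hy with hy | hy
    exacts [h₁ y hy, h₂ y hy]
  · rintro c hc _ ⟨l, hl, h, rfl⟩
    refine ⟨l.map (c • ·), by simpa using hl, ?_, List.smul_sum.symm⟩
    simp only [List.mem_map, forall_exists_index, and_imp, forall_apply_eq_imp_iff₂]
    intro y hy
    obtain ⟨i, hi⟩ := Set.mem_iUnion.1 (h y hy)
    exact Set.mem_iUnion_of_mem i ((hW i).2.2 c hc y hi)

lemma wedgeSum_comp {κ : Type*} {σ : κ → ι} (hσ : Function.Surjective σ) :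
    wedgeSum (W ∘ σ) = wedgeSum W := by
  simp only [wedgeSum, Function.comp_apply, hσ.iUnion_comp]

lemma sum_mem_wedgeSum {κ : Type*} [Fintype κ] [Nonempty κ] {V : κ → Set E}
    (hV : ∀ k, IsWedge (V k)) {z : κ → E} (hz : ∀ k, z k ∈ V k) : ∑ k, z k ∈ wedgeSum V :=
  have hS := isWedge_wedgeSum hV
  Finset.sum_induction z (· ∈ wedgeSum V) (fun x y hx hy => hS.2.1 x hx y hy) hS.zero_mem
    fun k _ => subset_wedgeSum k (hz k)

lemma span_iUnion_eq_top (hgen : wedgeSum W - wedgeSum W = Set.univ) :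
    Submodule.span ℝ (⋃ i, W i) = ⊤ := by
  have hS : wedgeSum W ⊆ Submodule.span ℝ (⋃ i, W i) :=
    wedgeSum_subset (M := (Submodule.span ℝ (⋃ i, W i)).toAddSubmonoid) fun i =>
      (Set.subset_iUnion W i).trans Submodule.subset_span
  refine eq_top_iff.2 fun u _ => ?_
  obtain ⟨a, ha, b, hb, rfl⟩ : u ∈ wedgeSum W - wedgeSum W := hgen ▸ Set.mem_univ u
  exact sub_mem (hS ha) (hS hb)

end Wedge

section Extension

variable {E : Type*} [AddCommGroup E]

lemma exists_forall_map_sub_eq {G : Type*} [AddCommGroup G] {S : Set E}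
    (hgen : S - S = Set.univ) {f : E → G} (hadd : ∀ x ∈ S, ∀ y ∈ S, f (x + y) = f x + f y) :
    ∃ g : E → G, ∀ x ∈ S, ∀ y ∈ S, g (x - y) = f x - f y := by
  have hrep (u : E) : ∃ a ∈ S, ∃ b ∈ S, a - b = u := Set.mem_sub.1 (hgen ▸ Set.mem_univ u)
  choose a ha b hb hab using hrep
  refine ⟨fun u => f (a u) - f (b u), fun x hx y hy => sub_eq_sub_iff_add_eq_add.2 ?_⟩
  have := congrArg f (sub_eq_sub_iff_add_eq_add.1 (hab (x - y)))
  rwa [hadd _ (ha _) _ hy, hadd _ hx _ (hb _)] at this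

variable [Module ℝ E]

lemma IsWedge.exists_linearMap_eqOn {S : Set E} (hS : IsWedge S) (hgen : S - S = Set.univ)
    {f : E → ℝ} (hadd : ∀ x ∈ S, ∀ y ∈ S, f (x + y) = f x + f y)
    (hsmul : ∀ c : ℝ, 0 < c → ∀ x ∈ S, f (c • x) = c * f x) :
    ∃ ψ : E →ₗ[ℝ] ℝ, Set.EqOn ψ f S := by
  obtain ⟨g, hg⟩ := exists_forall_map_sub_eq hgen hadd
  have hrep (u : E) : ∃ x ∈ S, ∃ y ∈ S, x - y = u := Set.mem_sub.1 (hgen ▸ Set.mem_univ u)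
  have hg_add (u v : E) : g (u + v) = g u + g v := by
    obtain ⟨x, hx, y, hy, rfl⟩ := hrep u
    obtain ⟨x', hx', y', hy', rfl⟩ := hrep v
    rw [sub_add_sub_comm, hg _ (hS.2.1 _ hx _ hx') _ (hS.2.1 _ hy _ hy'), hg x hx y hy,
      hg x' hx' y' hy', hadd _ hx _ hx', hadd _ hy _ hy']
    ring
  let gₗ : E →+ ℝ := AddMonoidHom.mk' g hg_add
  have hg_smul_pos (c : ℝ) (hc : 0 < c) (u : E) : g (c • u) = c * g u := by
    obtain ⟨x, hx, y, hy, rfl⟩ := hrep u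
    rw [smul_sub, hg _ (hS.2.2 c hc.le x hx) _ (hS.2.2 c hc.le y hy), hg x hx y hy,
      hsmul c hc x hx, hsmul c hc y hy]
    ring
  have hg_smul (c : ℝ) (u : E) : gₗ (c • u) = c * gₗ u := by
    rcases lt_trichotomy c 0 with hc | rfl | hc
    · rw [← neg_neg c, neg_smul, map_neg, AddMonoidHom.mk'_apply, hg_smul_pos _ (neg_pos.2 hc)]
      simp
    · rw [zero_smul, map_zero, zero_mul]
    · exact hg_smul_pos c hc u
  refine ⟨{ gₗ with map_smul' := hg_smul }, fun x hx => ?_⟩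
  have hf0 : f 0 = 0 := by
    simpa using hadd 0 hS.zero_mem 0 hS.zero_mem
  change g x = f x
  rw [← sub_zero x, hg x hx 0 hS.zero_mem, hf0, sub_zero, sub_zero]

end Extension

namespace Finsupp

variable {α M N : Type*} [Zero M]

lemma sum_eq_sum_subtype [AddCommMonoid N] {T : Finset α} {f : α →₀ M} (hf : ∀ a ∉ T, f a = 0)
    (g : α → M → N) (hg : ∀ a, g a 0 = 0) : f.sum g = ∑ k : T, g k (f k) := by
  rw [Finsupp.sum_of_support_subset f (fun a ha => by_contra fun haT =>
    Finsupp.mem_support_iff.1 ha (hf a haT)) g fun a _ => hg a]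
  exact (Finset.sum_coe_sort T _).symm

lemma exists_extend_subtype {W : α → Set M} (hW : ∀ a, 0 ∈ W a) (T : Finset α) {z : T → M}
    (hz : ∀ k : T, z k ∈ W k) :
    ∃ Z : α →₀ M, (∀ a, Z a ∈ W a) ∧ (∀ k : T, Z k = z k) ∧ ∀ a ∉ T, Z a = 0 := by
  classical
  refine ⟨(Finsupp.equivFunOnFinite.symm z).extendDomain, fun a => ?_, fun k => ?_, fun a ha => ?_⟩
  · by_cases ha : a ∈ T
    · simpa [Finsupp.extendDomain_apply, ha] using hz ⟨a, ha⟩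
    · simpa [Finsupp.extendDomain_apply, ha] using hW a
  all_goals simp [Finsupp.extendDomain_apply, *]

end Finsupp

section Riesz

variable {E ι : Type*} [AddCommGroup E] [Module ℝ E] {𝒲 : Set (Set E)}

lemma HasRDP2.of_fintype (h : HasRDP2 𝒲) {κ : Type*} [Fintype κ] {V : κ → Set E}
    (hV : ∀ k, V k ∈ 𝒲) {x₁ x₂ : E} (hx₁ : x₁ ∈ wedgeSum V) (hx₂ : x₂ ∈ wedgeSum V)
    {y : κ → E} (hy : ∀ k, y k ∈ V k) (hsum : x₁ + x₂ = ∑ k, y k) :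
    ∃ z₁ z₂ : κ → E, (∀ k, z₁ k ∈ V k) ∧ (∀ k, z₂ k ∈ V k) ∧
      x₁ = ∑ k, z₁ k ∧ x₂ = ∑ k, z₂ k ∧ ∀ k, y k = z₁ k + z₂ k := by
  let e := (Fintype.equivFin κ).symm
  rw [← wedgeSum_comp e.surjective] at hx₁ hx₂
  obtain ⟨z₁, z₂, hz₁, hz₂, rfl, rfl, hyz⟩ := h _ (V ∘ e) (fun j => hV (e j)) x₁ x₂ hx₁ hx₂
    (y ∘ e) (fun j => hy (e j)) (hsum.trans (e.sum_comp y).symm)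
  refine ⟨z₁ ∘ e.symm, z₂ ∘ e.symm, fun k => by simpa using hz₁ (e.symm k),
    fun k => by simpa using hz₂ (e.symm k), (e.symm.sum_comp z₁).symm,
    (e.symm.sum_comp z₂).symm, fun k => by simpa using hyz (e.symm k)⟩

variable {W : ι → Set E}

lemma HasRDP2.exists_finsupp_split [Nonempty ι] (h : HasRDP2 𝒲) (hW𝒲 : ∀ i, W i ∈ 𝒲)
    (hW : ∀ i, IsWedge (W i)) {y₁ y₂ y : ι →₀ E} (hy₁ : ∀ i, y₁ i ∈ W i)
    (hy₂ : ∀ i, y₂ i ∈ W i) (hy : ∀ i, y i ∈ W i)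
    (hsum : (y₁.sum fun _ v => v) + (y₂.sum fun _ v => v) = y.sum fun _ v => v) :
    ∃ z₁ z₂ : ι →₀ E, (∀ i, z₁ i ∈ W i) ∧ (∀ i, z₂ i ∈ W i) ∧
      (z₁.sum fun _ v => v) = (y₁.sum fun _ v => v) ∧
      (z₂.sum fun _ v => v) = (y₂.sum fun _ v => v) ∧ y = z₁ + z₂ := by
  classical
  -- the extra index keeps `T` nonempty, as `wedgeSum` over an empty family is empty
  set T := insert (Classical.arbitrary ι) (y₁.support ∪ y₂.support ∪ y.support)
  have hT (i : ι) (hi : i ∉ T) : y₁ i = 0 ∧ y₂ i = 0 ∧ y i = 0 := by simp_all [T]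
  have hTne : Nonempty T := ⟨⟨_, Finset.mem_insert_self _ _⟩⟩
  have hsum_T (f : ι →₀ E) (hf : ∀ i ∉ T, f i = 0) : (f.sum fun _ v => v) = ∑ k : T, f k :=
    Finsupp.sum_eq_sum_subtype hf _ fun _ => rfl
  simp only [hsum_T y₁ fun i hi => (hT i hi).1, hsum_T y₂ fun i hi => (hT i hi).2.1,
    hsum_T y fun i hi => (hT i hi).2.2] at hsum ⊢
  obtain ⟨z₁, z₂, hz₁, hz₂, hs₁, hs₂, hyz⟩ := h.of_fintype (V := fun k : T => W k)
    (fun k => hW𝒲 k) (sum_mem_wedgeSum (fun k : T => hW k) fun k => hy₁ k)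
    (sum_mem_wedgeSum (fun k : T => hW k) fun k => hy₂ k) (fun k => hy k) hsum
  have h0 (i : ι) : (0 : E) ∈ W i := (hW i).zero_mem
  obtain ⟨Z₁, hZ₁, hZ₁T, hZ₁T'⟩ := Finsupp.exists_extend_subtype h0 T hz₁
  obtain ⟨Z₂, hZ₂, hZ₂T, hZ₂T'⟩ := Finsupp.exists_extend_subtype h0 T hz₂
  refine ⟨Z₁, Z₂, hZ₁, hZ₂, ?_, ?_, ?_⟩
  · simp only [hsum_T Z₁ hZ₁T', hZ₁T, hs₁]
  · simp only [hsum_T Z₂ hZ₂T', hZ₂T, hs₂]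
  · ext i
    by_cases hi : i ∈ T
    · simpa [hZ₁T ⟨i, hi⟩, hZ₂T ⟨i, hi⟩] using hyz ⟨i, hi⟩
    · simp [hZ₁T' i hi, hZ₂T' i hi, (hT i hi).2.2]

end Riesz

section DecompositionValues

variable {E ι : Type*} [AddCommGroup E] [Module ℝ E] {W : ι → Set E} {φ : ι → E →ₗ[ℝ] ℝ}

def decompositionValues (W : ι → Set E) (φ : ι → E →ₗ[ℝ] ℝ) (x : E) : Set ℝ :=
  {r | ∃ y : ι →₀ E, (∀ i, y i ∈ W i) ∧ (y.sum fun _ v => v) = x ∧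
    r = y.sum fun i v => (φ i) v}

noncomputable def decompositionSup (W : ι → Set E) (φ : ι → E →ₗ[ℝ] ℝ) (x : E) : ℝ :=
  sSup (decompositionValues W φ x)

lemma decompositionValues_le {u : E →ₗ[ℝ] ℝ} (hu : ∀ i, ∀ v ∈ W i, φ i v ≤ u v) {x : E}
    {r : ℝ} (hr : r ∈ decompositionValues W φ x) : r ≤ u x := by
  obtain ⟨y, hy, rfl, rfl⟩ := hr
  rw [map_finsuppSum]
  exact Finset.sum_le_sum fun i _ => hu i _ (hy i)

lemma apply_mem_decompositionValues (hW : ∀ i, IsWedge (W i)) {i : ι} {x : E} (hx : x ∈ W i) :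
    φ i x ∈ decompositionValues W φ x := by
  classical
  refine ⟨Finsupp.single i x, fun j => ?_, Finsupp.sum_single_index rfl,
    (Finsupp.sum_single_index (h := fun j v => φ j v) (map_zero (φ i))).symm⟩
  rcases eq_or_ne i j with rfl | hne
  · simpa using hx
  · simpa [Finsupp.single_eq_of_ne hne.symm] using (hW j).zero_mem

lemma add_mem_decompositionValues (hW : ∀ i, IsWedge (W i)) {x₁ x₂ : E} {r₁ r₂ : ℝ}
    (h₁ : r₁ ∈ decompositionValues W φ x₁) (h₂ : r₂ ∈ decompositionValues W φ x₂) :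
    r₁ + r₂ ∈ decompositionValues W φ (x₁ + x₂) := by
  obtain ⟨y₁, hy₁, rfl, rfl⟩ := h₁
  obtain ⟨y₂, hy₂, rfl, rfl⟩ := h₂
  refine ⟨y₁ + y₂, fun i => (hW i).2.1 _ (hy₁ i) _ (hy₂ i),
    Finsupp.sum_add_index' (fun _ => rfl) fun _ _ _ => rfl, ?_⟩
  rw [Finsupp.sum_add_index' (fun i => map_zero (φ i)) fun i => map_add (φ i)]

lemma smul_mem_decompositionValues (hW : ∀ i, IsWedge (W i)) {c : ℝ} (hc : 0 ≤ c) {x : E}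
    {r : ℝ} (hr : r ∈ decompositionValues W φ x) : c * r ∈ decompositionValues W φ (c • x) := by
  obtain ⟨y, hy, rfl, rfl⟩ := hr
  refine ⟨c • y, fun i => (hW i).2.2 c hc _ (hy i), ?_, ?_⟩
  · rw [Finsupp.sum_smul_index' fun _ => rfl, Finsupp.smul_sum]
  · rw [Finsupp.sum_smul_index' fun i => map_zero (φ i)]
    simp only [map_smul, smul_eq_mul]
    exact Finset.mul_sum _ _ _

lemma decompositionValues_nonempty (hW : ∀ i, IsWedge (W i)) {x : E} (hx : x ∈ wedgeSum W) :
    (decompositionValues W φ x).Nonempty := by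
  let M : AddSubmonoid E :=
    { carrier := {x | (decompositionValues W φ x).Nonempty}
      add_mem' := fun ⟨_, h₁⟩ ⟨_, h₂⟩ => ⟨_, add_mem_decompositionValues hW h₁ h₂⟩
      zero_mem' := ⟨0, 0, fun i => (hW i).zero_mem, Finsupp.sum_zero_index,
        Finsupp.sum_zero_index.symm⟩ }
  exact wedgeSum_subset (M := M) (fun i _ hx => ⟨_, apply_mem_decompositionValues hW hx⟩) hx

lemma decompositionValues_add {𝒲 : Set (Set E)} (h : HasRDP2 𝒲) (hW𝒲 : ∀ i, W i ∈ 𝒲)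
    (hW : ∀ i, IsWedge (W i)) {x₁ x₂ : E} (hx₁ : x₁ ∈ wedgeSum W) (hx₂ : x₂ ∈ wedgeSum W) :
    decompositionValues W φ (x₁ + x₂) =
      decompositionValues W φ x₁ + decompositionValues W φ x₂ := by
  have := nonempty_of_mem_wedgeSum hx₁
  ext r
  constructor
  · rintro ⟨y, hy, hys, rfl⟩
    obtain ⟨-, y₁, hy₁, rfl, -⟩ := decompositionValues_nonempty (φ := φ) hW hx₁
    obtain ⟨-, y₂, hy₂, rfl, -⟩ := decompositionValues_nonempty (φ := φ) hW hx₂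
    obtain ⟨z₁, z₂, hz₁, hz₂, hs₁, hs₂, rfl⟩ := h.exists_finsupp_split hW𝒲 hW hy₁ hy₂ hy hys.symm
    exact ⟨_, ⟨z₁, hz₁, hs₁, rfl⟩, _, ⟨z₂, hz₂, hs₂, rfl⟩,
      (Finsupp.sum_add_index' (fun i => map_zero (φ i)) fun i => map_add (φ i)).symm⟩
  · rintro ⟨r₁, h₁, r₂, h₂, rfl⟩
    exact add_mem_decompositionValues hW h₁ h₂

lemma decompositionValues_smul (hW : ∀ i, IsWedge (W i)) {c : ℝ} (hc : 0 < c) (x : E) :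
    decompositionValues W φ (c • x) = c • decompositionValues W φ x := by
  ext r
  rw [Set.mem_smul_set]
  constructor
  · intro hr
    refine ⟨c⁻¹ * r, ?_, by rw [smul_eq_mul, mul_inv_cancel_left₀ hc.ne']⟩
    simpa [smul_smul, inv_mul_cancel₀ hc.ne'] using
      smul_mem_decompositionValues hW (inv_nonneg.2 hc.le) hr
  · rintro ⟨r, hr, rfl⟩
    exact smul_mem_decompositionValues hW hc.le hr

lemma decompositionSup_add {𝒲 : Set (Set E)} (h : HasRDP2 𝒲) (hW𝒲 : ∀ i, W i ∈ 𝒲)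
    (hW : ∀ i, IsWedge (W i)) (hbdd : ∀ x, BddAbove (decompositionValues W φ x)) {x₁ x₂ : E}
    (hx₁ : x₁ ∈ wedgeSum W) (hx₂ : x₂ ∈ wedgeSum W) :
    decompositionSup W φ (x₁ + x₂) = decompositionSup W φ x₁ + decompositionSup W φ x₂ := by
  rw [decompositionSup, decompositionValues_add h hW𝒲 hW hx₁ hx₂,
    csSup_add (decompositionValues_nonempty hW hx₁) (hbdd x₁)
      (decompositionValues_nonempty hW hx₂) (hbdd x₂)]
  rfl

lemma decompositionSup_smul (hW : ∀ i, IsWedge (W i)) {c : ℝ} (hc : 0 < c) (x : E) :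
    decompositionSup W φ (c • x) = c * decompositionSup W φ x := by
  rw [decompositionSup, decompositionValues_smul hW hc, Real.sSup_smul_of_nonneg hc.le]
  rfl

end DecompositionValues

section MultiSup

variable {E ι : Type*} [AddCommGroup E] [Module ℝ E] {W : ι → Set E} {φ : ι → E →ₗ[ℝ] ℝ}

def dualWedge (C : Set E) : Set (E →ₗ[ℝ] ℝ) :=
  {ξ | ∀ x ∈ C, 0 ≤ ξ x}

lemma isMultiUpperBound_dualWedge_iff {u : E →ₗ[ℝ] ℝ} :
    IsMultiUpperBound φ (fun i => dualWedge (W i)) u ↔ ∀ i, ∀ x ∈ W i, φ i x ≤ u x := by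
  simp only [IsMultiUpperBound, dualWedge, Set.mem_ofPred_eq, LinearMap.sub_apply, sub_nonneg]

lemma isMultiSup_of_eqOn_decompositionSup (hW : ∀ i, IsWedge (W i))
    (hbdd : ∀ x, BddAbove (decompositionValues W φ x)) {ψ : E →ₗ[ℝ] ℝ}
    (hψ : Set.EqOn ψ (decompositionSup W φ) (wedgeSum W)) :
    IsMultiSup φ (fun i => dualWedge (W i)) ψ := by
  refine ⟨isMultiUpperBound_dualWedge_iff.2 fun i x hx => ?_, fun u hu i x hx => ?_⟩
  · rw [hψ (subset_wedgeSum i hx)]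
    exact le_csSup (hbdd x) (apply_mem_decompositionValues hW hx)
  · rw [LinearMap.sub_apply, sub_nonneg, hψ (subset_wedgeSum i hx)]
    exact csSup_le ⟨_, apply_mem_decompositionValues hW hx⟩ fun r hr =>
      decompositionValues_le (isMultiUpperBound_dualWedge_iff.1 hu) hr

lemma IsMultiSup.eq_of_span_eq_top (hspan : Submodule.span ℝ (⋃ i, W i) = ⊤)
    {ψ₁ ψ₂ : E →ₗ[ℝ] ℝ} (h₁ : IsMultiSup φ (fun i => dualWedge (W i)) ψ₁)
    (h₂ : IsMultiSup φ (fun i => dualWedge (W i)) ψ₂) : ψ₁ = ψ₂ := by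
  refine LinearMap.ext_on hspan fun x hx => ?_
  obtain ⟨i, hi⟩ := Set.mem_iUnion.1 hx
  have h₁₂ := h₁.2 ψ₂ h₂.1 i x hi
  have h₂₁ := h₂.2 ψ₁ h₁.1 i x hi
  rw [LinearMap.sub_apply, sub_nonneg] at h₁₂ h₂₁
  exact le_antisymm h₁₂ h₂₁

end MultiSup

theorem stmt_17_general {E ι : Type*} [AddCommGroup E] [Module ℝ E]
    (𝒲 : Set (Set E)) (h𝒲 : ∀ W ∈ 𝒲, IsWedge W)
    (hRDP : HasRDP2 𝒲)
    (W : ι → Set E) (hWi : ∀ i, W i ∈ 𝒲)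
    (hgen : wedgeSum W - wedgeSum W = Set.univ)
    (φ : ι → E →ₗ[ℝ] ℝ)
    (ψ₀ : E →ₗ[ℝ] ℝ) (hψ₀ : ∀ i, ∀ x ∈ W i, 0 ≤ ψ₀ x - (φ i) x) :
    (∃! ψ : E →ₗ[ℝ] ℝ,
      IsMultiSup φ (fun i => {ξ : E →ₗ[ℝ] ℝ | ∀ x ∈ W i, 0 ≤ ξ x}) ψ) ∧
    ∀ ψ : E →ₗ[ℝ] ℝ,
      IsMultiSup φ (fun i => {ξ : E →ₗ[ℝ] ℝ | ∀ x ∈ W i, 0 ≤ ξ x}) ψ →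
      ∀ x ∈ wedgeSum W,
        IsLUB {r : ℝ | ∃ y : ι →₀ E, (∀ i, y i ∈ W i) ∧ (y.sum fun _ v => v) = x ∧
          r = y.sum fun i v => (φ i) v} (ψ x) := by
  have hW (i : ι) : IsWedge (W i) := h𝒲 _ (hWi i)
  obtain ⟨a, ha, -⟩ : (0 : E) ∈ wedgeSum W - wedgeSum W := hgen ▸ Set.mem_univ 0
  have := nonempty_of_mem_wedgeSum ha
  have hbdd (x : E) : BddAbove (decompositionValues W φ x) :=
    ⟨ψ₀ x, fun _ => decompositionValues_le fun i v hv => sub_nonneg.1 (hψ₀ i v hv)⟩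
  obtain ⟨ψ, hψ⟩ := (isWedge_wedgeSum hW).exists_linearMap_eqOn hgen
    (fun _ hx _ hy => decompositionSup_add hRDP hWi hW hbdd hx hy)
    (fun _ hc x _ => decompositionSup_smul hW hc x)
  have hsup := isMultiSup_of_eqOn_decompositionSup hW hbdd hψ
  have huniq (ψ' : E →ₗ[ℝ] ℝ) (hψ' : IsMultiSup φ (fun i => dualWedge (W i)) ψ') : ψ' = ψ :=
    hψ'.eq_of_span_eq_top (span_iUnion_eq_top hgen) hsup
  refine ⟨⟨ψ, hsup, huniq⟩, fun ψ' hψ' x hx => ?_⟩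
  rw [huniq ψ' hψ', hψ hx]
  exact isLUB_csSup (decompositionValues_nonempty hW hx) (hbdd x)

theorem stmt_17 {E ι : Type*} [AddCommGroup E] [Module ℝ E]
    (𝒲 : Set (Set E)) (h𝒲ne : 𝒲.Nonempty) (h𝒲 : ∀ W ∈ 𝒲, IsWedge W)
    (hRDP : HasRDP2 𝒲)
    (W : ι → Set E) (hWi : ∀ i, W i ∈ 𝒲)
    (hgen : wedgeSum W - wedgeSum W = Set.univ)
    (φ : ι → E →ₗ[ℝ] ℝ)
    (ψ₀ : E →ₗ[ℝ] ℝ) (hψ₀ : ∀ i, ∀ x ∈ W i, 0 ≤ ψ₀ x - (φ i) x) :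
    (∃! ψ : E →ₗ[ℝ] ℝ,
      IsMultiSup φ (fun i => {ξ : E →ₗ[ℝ] ℝ | ∀ x ∈ W i, 0 ≤ ξ x}) ψ) ∧
    ∀ ψ : E →ₗ[ℝ] ℝ,
      IsMultiSup φ (fun i => {ξ : E →ₗ[ℝ] ℝ | ∀ x ∈ W i, 0 ≤ ξ x}) ψ →
      ∀ x ∈ wedgeSum W,
        IsLUB {r : ℝ | ∃ y : ι →₀ E, (∀ i, y i ∈ W i) ∧ (y.sum fun _ v => v) = x ∧
          r = y.sum fun i v => (φ i) v} (ψ x) :=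
  stmt_17_general 𝒲 h𝒲 hRDP W hWi hgen φ ψ₀ hψ₀
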